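/- arXiv:1803.03086 — 3 statements merged into one kernel-verified Lean document; each statement's English description precedes it below -/
import Mathlib

section
/- If G is a monoid generated by Σ = {s_1,...,s_d} with relations s_i s_j = s_i whenever A(i,j) = 0 for a d×d binary matrix A, and the subgraph F of the Cayley graph consisting of words ending in their unique right-free generator is finite (G has finite representation), then for every periodic word g = g_1 g_2 ⋯ g_n g_1 (i.e. each consecutive pair g_i g_{i+1} is a valid two-word, A(g_i,g_{i+1})=1, and g_{n+1}=g_1), at least one of g_1,...,g_n is a right free generator (i.e. a generator s_i with A(i,j)=1 for all j). -/
open Matrix Polynomial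

/-- `i → j` is an edge in the digraph of the binary matrix `A`. -/
def adjB {d : ℕ} (A : Fin d → Fin d → Bool) (i j : Fin d) : Prop := A i j = true

/-- `i` is a right free generator: its row of `A` is all ones. -/
def rfB {d : ℕ} (A : Fin d → Fin d → Bool) (i : Fin d) : Prop := ∀ j, A i j = true

/-- The letter at position `s` (0-based) of the word `l` is right free. -/
def rfAt {d : ℕ} (A : Fin d → Fin d → Bool) (l : List (Fin d)) (s : ℕ) : Prop :=
  ∃ h : s < l.length, rfB A (l.get ⟨s, h⟩)

/-- `l` is a based closed walk of length `n` in the digraph of `A`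
(recorded as the list of its `n` vertices, with the closing edge from the
last vertex back to the first). -/
def isClosedWalk {d : ℕ} (A : Fin d → Fin d → Bool) (n : ℕ) (l : List (Fin d)) : Prop :=
  l.length = n ∧ l.Chain' (adjB A) ∧ ∃ h : l ≠ [], adjB A (l.getLast h) (l.head h)

/-- `l` is a based closed walk of length `n` whose unique right free vertex is the last one. -/
def isXiWalk {d : ℕ} (A : Fin d → Fin d → Bool) (n : ℕ) (l : List (Fin d)) : Prop :=
  isClosedWalk A n l ∧ rfAt A l (n - 1) ∧ ∀ k < n - 1, ¬ rfAt A l k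

/-- `ξ_n`: the number of based closed walks of length `n` whose unique right free
vertex is the last one. -/
noncomputable def xiCount {d : ℕ} (A : Fin d → Fin d → Bool) (n : ℕ) : ℕ :=
  {l : List (Fin d) | isXiWalk A n l}.ncard

/-- `G = ⟨Σ | R_A⟩` has a finite representation: there are only finitely many
reduced words containing no right free generator except possibly at the last position. -/
def FiniteRep {d : ℕ} (A : Fin d → Fin d → Bool) : Prop :=
  {l : List (Fin d) | l ≠ [] ∧ l.Chain' (adjB A) ∧ ∀ k < l.length - 1, ¬ rfAt A l k}.Finite

/-- Every cycle in the digraph of `A` passes through a right free vertex. -/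
def CyclesHitRF {d : ℕ} (A : Fin d → Fin d → Bool) : Prop :=
  ∀ l : List (Fin d), l.Chain' (adjB A) →
    (∃ h : l ≠ [], adjB A (l.getLast h) (l.head h)) → ∃ k, rfAt A l k

/-- The 0-1 matrix of `A` with natural number entries. -/
def AmatN {d : ℕ} (A : Fin d → Fin d → Bool) : Matrix (Fin d) (Fin d) ℕ :=
  Matrix.of fun i j => if A i j then 1 else 0

/-- The 0-1 matrix of `A` with real entries. -/
def AmatR {d : ℕ} (A : Fin d → Fin d → Bool) : Matrix (Fin d) (Fin d) ℝ :=
  Matrix.of fun i j => if A i j then 1 else 0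

/-! If no letter of the periodic word `w` were right free, every power `w ^ m` would be a reduced
word without right free letters; these powers have unbounded length, so there would be
infinitely many such words. -/

namespace List

variable {α : Type*} {R : α → α → Prop}

theorem isChain_flatten_replicate_of_rel_getLast_head {l : List α} (hne : l ≠ [])
    (hl : l.IsChain R) (hclose : R (l.getLast hne) (l.head hne)) (n : ℕ) :
    (replicate n l).flatten.IsChain R := by
  refine (isChain_flatten fun h => hne (eq_of_mem_replicate h).symm).2
    ⟨fun l' hl' => eq_of_mem_replicate hl' ▸ hl, isChain_replicate_of_rel n ?_⟩
  simpa [getLast?_eq_some_getLast hne, head?_eq_some_head hne] using hclose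

theorem length_flatten_replicate (n : ℕ) (l : List α) :
    (replicate n l).flatten.length = n * l.length := by
  simp [length_flatten]

theorem infinite_setOf_isChain_of_rel_getLast_head {p : α → Prop} {l : List α} (hne : l ≠ [])
    (hl : l.IsChain R) (hclose : R (l.getLast hne) (l.head hne)) (hp : ∀ x ∈ l, p x) :
    {w : List α | w ≠ [] ∧ w.IsChain R ∧ ∀ x ∈ w, p x}.Infinite := by
  have hpos : 0 < l.length := length_pos_iff.mpr hne
  refine Set.infinite_of_injective_forall_mem (f := fun n : ℕ => (replicate (n + 1) l).flatten)
    (fun m n hmn => ?_) fun n =>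
      ⟨?_, isChain_flatten_replicate_of_rel_getLast_head hne hl hclose _, ?_⟩
  · have hlen := congrArg length hmn
    simp only [length_flatten_replicate] at hlen
    simpa using Nat.eq_of_mul_eq_mul_right hpos hlen
  · rw [← length_pos_iff, length_flatten_replicate]
    positivity
  · intro x hx
    obtain ⟨l', hl', hx⟩ := mem_flatten.mp hx
    exact hp x (eq_of_mem_replicate hl' ▸ hx)

end List

theorem FiniteRep.finite_setOf_isChain_not_rfB {d : ℕ} {A : Fin d → Fin d → Bool}
    (hfin : FiniteRep A) :
    {w : List (Fin d) | w ≠ [] ∧ w.IsChain (adjB A) ∧ ∀ x ∈ w, ¬ rfB A x}.Finite :=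
  hfin.subset fun _ ⟨hne, hw, hrf⟩ =>
    ⟨hne, hw, fun _ _ ⟨_, hk⟩ => hrf _ (List.get_mem _ _) hk⟩

/-- If the monoid `G = ⟨Σ | R_A⟩` has a finite representation, then
every periodic word (based closed walk in the digraph of `A`) contains at least one
right free generator. -/
theorem cycle_contains_free_generator {d : ℕ} (A : Fin d → Fin d → Bool)
    (hfin : FiniteRep A) (l : List (Fin d)) (hne : l ≠ [])
    (hchain : l.Chain' (adjB A)) (hclose : adjB A (l.getLast hne) (l.head hne)) :
    ∃ k : Fin l.length, rfB A (l.get k) := by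
  by_contra! hnone
  have hnot_rf : ∀ x ∈ l, ¬ rfB A x := fun x hx => by
    obtain ⟨k, rfl⟩ := List.mem_iff_get.mp hx
    exact hnone k
  exact List.infinite_setOf_isChain_of_rel_getLast_head hne hchain hclose hnot_rf
    hfin.finite_setOf_isChain_not_rfB
end

section
/- Let A be a d×d binary matrix in which every cycle passes through a right-free vertex. With P_n the set of based closed walks of length n, Ξ_n ⊆ P_n the subset of those whose unique right-free vertex among positions 1..n is position n, T(Ξ_n) the set of all cyclic rotations of elements of Ξ_n, and L(P_m, Ξ_l) the set obtained from u ∈ P_m and v ∈ Ξ_l by inserting the first l letters of v into u immediately after the first right-free vertex of u: the sets L(P_{n−1}, Ξ_1), L(P_{n−2}, Ξ_2), ..., L(P_1, Ξ_{n−1}), T(Ξ_n) are pairwise disjoint and their union is P_n. -/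
open Matrix Polynomial

/-- `T(Ξ_n)`: all cyclic rotations of the walks in `Ξ_n`. -/
def rotSet {d : ℕ} (A : Fin d → Fin d → Bool) (n : ℕ) : Set (List (Fin d)) :=
  {x | ∃ l, isXiWalk A n l ∧ ∃ i, i < n ∧ x = l.drop i ++ l.take i}

/-- `L(P_m, Ξ_l)`: walks obtained from a based closed walk `u` of length `m` and a
walk `v ∈ Ξ_l` by inserting `v` into `u` immediately after the first right free
vertex of `u` (at 0-based position `s`). -/
def insSet {d : ℕ} (A : Fin d → Fin d → Bool) (m l0 : ℕ) : Set (List (Fin d)) :=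
  {x | ∃ u v s, isClosedWalk A m u ∧ isXiWalk A l0 v ∧ rfAt A u s ∧
    (∀ k < s, ¬ rfAt A u k) ∧ x = u.take (s + 1) ++ v ++ u.drop (s + 1)}

/-! A right free vertex has an edge to every vertex, so a closed walk can be cut open or glued
together right after a right free vertex without checking any edge; together with the invariance
of closed walks under rotation, this identifies `L(P_{n-l}, Ξ_l)` with the closed walks whose first
two right free vertices are `l` apart, and `T(Ξ_n)` with those having exactly one right free
vertex. Every closed walk has a right free vertex, so exactly one of these cases occurs. -/

theorem List.eq_of_append_cons_eq_append_cons {α : Type*} {P : α → Prop}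
    {p p' q q' : List α} {r r' : α} (h : p ++ r :: q = p' ++ r' :: q')
    (hp : ∀ a ∈ p, ¬ P a) (hp' : ∀ a ∈ p', ¬ P a) (hr : P r) (hr' : P r') :
    p = p' ∧ r = r' ∧ q = q' := by
  induction p generalizing p' with
  | nil =>
    cases p' with
    | nil => simpa using h
    | cons b p' =>
      obtain ⟨rfl, -⟩ := List.cons_eq_cons.1 h
      exact absurd hr (hp' r List.mem_cons_self)
  | cons a p ih =>
    cases p' with
    | nil =>
      obtain ⟨rfl, -⟩ := List.cons_eq_cons.1 h
      exact absurd hr' (hp a List.mem_cons_self)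
    | cons b p' =>
      simp only [List.cons_append, List.cons.injEq] at h
      obtain ⟨rfl, h⟩ := h
      obtain ⟨rfl, rfl, rfl⟩ := ih h (fun x hx => hp x (List.mem_cons_of_mem _ hx))
        (fun x hx => hp' x (List.mem_cons_of_mem _ hx))
      exact ⟨rfl, rfl, rfl⟩

theorem List.exists_eq_append_cons_of_exists {α : Type*} {P : α → Prop} {l : List α}
    (h : ∃ a ∈ l, P a) : ∃ p r q, l = p ++ r :: q ∧ (∀ a ∈ p, ¬ P a) ∧ P r := by
  classical
  obtain ⟨r, hr⟩ := Option.isSome_iff_exists.1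
    (List.find?_isSome (xs := l) (p := fun a => decide (P a)) |>.2 (by simpa using h))
  obtain ⟨hPr, p, q, rfl, hp⟩ := List.find?_eq_some_iff_append.1 hr
  exact ⟨p, r, q, rfl, by simpa using hp, by simpa using hPr⟩

theorem List.take_length_add_one_append_drop {α : Type*} (p q v : List α) (r : α) :
    (p ++ r :: q).take (p.length + 1) ++ v ++ (p ++ r :: q).drop (p.length + 1) =
      p ++ r :: (v ++ q) := by
  rw [show p ++ r :: q = p ++ [r] ++ q by simp, List.take_left' (by simp),
    List.drop_left' (by simp)]
  simp

section ClosedWalk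
variable {d : ℕ} {A : Fin d → Fin d → Bool}

lemma isChain_append_iff_of_rfB_getLast {a b : List (Fin d)} (ha : ∀ r ∈ a.getLast?, rfB A r) :
    (a ++ b).IsChain (adjB A) ↔ a.IsChain (adjB A) ∧ b.IsChain (adjB A) := by
  rw [List.isChain_append]
  exact and_congr_right fun _ => and_iff_left fun r hr _ _ => ha r hr _

lemma isClosedWalk_iff {n : ℕ} {l : List (Fin d)} :
    isClosedWalk A n l ↔ l.length = n ∧ l ≠ [] ∧ l.IsChain (adjB A) ∧
      ∀ x ∈ l.getLast?, ∀ y ∈ l.head?, adjB A x y := by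
  unfold isClosedWalk
  constructor
  · rintro ⟨hn, hc, hl, he⟩
    refine ⟨hn, hl, hc, ?_⟩
    simpa [List.getLast?_eq_some_getLast hl, List.head?_eq_some_head hl] using he
  · rintro ⟨hn, hl, hc, he⟩
    exact ⟨hn, hc, hl, he _ (List.getLast?_eq_some_getLast hl) _ (List.head?_eq_some_head hl)⟩

lemma isClosedWalk_append_comm {n : ℕ} (a b : List (Fin d)) :
    isClosedWalk A n (a ++ b) ↔ isClosedWalk A n (b ++ a) := by
  by_cases ha : a = []
  · simp [ha]
  by_cases hb : b = []
  · simp [hb]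
  simp only [isClosedWalk_iff, List.isChain_append, List.length_append, Nat.add_comm a.length,
    ne_eq, List.append_eq_nil_iff, ha, hb, and_false, not_false_eq_true, List.getLast?_append,
    List.head?_append, List.getLast?_eq_some_getLast hb, List.getLast?_eq_some_getLast ha,
    List.head?_eq_some_head ha, List.head?_eq_some_head hb, Option.or_some]
  tauto

lemma isClosedWalk_append_cons_iff {n : ℕ} {p q : List (Fin d)} {r : Fin d} (hr : rfB A r) :
    isClosedWalk A n (p ++ r :: q) ↔
      p.length + q.length + 1 = n ∧ (q ++ p ++ [r]).IsChain (adjB A) := by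
  rw [← List.singleton_append, ← List.append_assoc, isClosedWalk_append_comm, isClosedWalk_iff,
    ← List.append_assoc]
  simp only [List.length_append, List.length_singleton, ne_eq, List.append_eq_nil_iff,
    List.cons_ne_nil, and_false, not_false_eq_true, true_and, List.getLast?_append,
    List.getLast?_singleton, Option.some_or, Option.mem_def, Option.some.injEq, forall_eq']
  constructor
  · rintro ⟨hn, hc, -⟩
    exact ⟨by omega, hc⟩
  · rintro ⟨hn, hc⟩
    exact ⟨by omega, hc, fun y _ => hr y⟩

end ClosedWalk

section RightFree
variable {d : ℕ} {A : Fin d → Fin d → Bool}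

lemma exists_rfAt_iff {x : List (Fin d)} : (∃ k, rfAt A x k) ↔ ∃ a ∈ x, rfB A a := by
  simp only [rfAt, List.get_eq_getElem, List.mem_iff_getElem]
  constructor
  · rintro ⟨k, hk, h⟩
    exact ⟨_, ⟨k, hk, rfl⟩, h⟩
  · rintro ⟨_, ⟨k, hk, rfl⟩, h⟩
    exact ⟨k, hk, h⟩

lemma CyclesHitRF.exists_rfB (h : CyclesHitRF A) {n : ℕ} {x : List (Fin d)}
    (hx : isClosedWalk A n x) : ∃ a ∈ x, rfB A a :=
  exists_rfAt_iff.1 (h x hx.2.1 hx.2.2)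

lemma rfAt_first_iff {u : List (Fin d)} {s : ℕ} :
    (rfAt A u s ∧ ∀ k < s, ¬ rfAt A u k) ↔
      ∃ p r q, u = p ++ r :: q ∧ p.length = s ∧ (∀ a ∈ p, ¬ rfB A a) ∧ rfB A r := by
  constructor
  · rintro ⟨⟨hs, hr⟩, hmin⟩
    refine ⟨u.take s, u[s], u.drop (s + 1), ?_, by simp; omega, ?_, hr⟩
    · rw [← List.drop_eq_getElem_cons hs, List.take_append_drop]
    · intro a ha har
      obtain ⟨k, hk, rfl⟩ := List.mem_iff_getElem.1 ha
      simp only [List.length_take] at hk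
      exact hmin k (by omega) ⟨by omega, by simpa using har⟩
  · rintro ⟨p, r, q, rfl, rfl, hp, hr⟩
    refine ⟨⟨by simp, by simpa using hr⟩, fun k hk ⟨_, hk'⟩ => hp p[k] (List.getElem_mem hk) ?_⟩
    simpa [List.getElem_append_left hk] using hk'

lemma isXiWalk_iff {n : ℕ} {v : List (Fin d)} :
    isXiWalk A n v ↔ ∃ w r, v = w ++ [r] ∧ w.length + 1 = n ∧ (∀ a ∈ w, ¬ rfB A a) ∧
      rfB A r ∧ (w ++ [r]).IsChain (adjB A) := by
  constructor
  · rintro ⟨hv, hfirst⟩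
    obtain ⟨p, r, q, rfl, hp, hw, hr⟩ := rfAt_first_iff.1 hfirst
    obtain ⟨hlen, hc⟩ := (isClosedWalk_append_cons_iff hr).1 hv
    obtain rfl : q = [] := List.eq_nil_of_length_eq_zero (by omega)
    exact ⟨p, r, rfl, by omega, hw, hr, by simpa using hc⟩
  · rintro ⟨w, r, rfl, hn, hw, hr, hc⟩
    exact ⟨(isClosedWalk_append_cons_iff hr).2 ⟨by simpa using hn, by simpa using hc⟩,
      rfAt_first_iff.2 ⟨w, r, [], rfl, by omega, hw, hr⟩⟩

lemma isClosedWalk_insert_iff {m l : ℕ} {p w q : List (Fin d)} {r r' : Fin d}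
    (hr : rfB A r) (hr' : rfB A r') (hl : w.length + 1 = l) :
    isClosedWalk A (m + l) (p ++ r :: (w ++ r' :: q)) ↔
      isClosedWalk A m (p ++ r :: q) ∧ (w ++ [r']).IsChain (adjB A) := by
  rw [isClosedWalk_append_cons_iff hr, isClosedWalk_append_cons_iff hr,
    show w ++ r' :: q ++ p ++ [r] = (w ++ [r']) ++ (q ++ p ++ [r]) by simp,
    isChain_append_iff_of_rfB_getLast (by simpa using hr')]
  have hlen : p.length + (w ++ r' :: q).length + 1 = m + l ↔ p.length + q.length + 1 = m := by
    simp only [List.length_append, List.length_cons]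
    omega
  rw [hlen]
  tauto

end RightFree

section Partition
variable {d : ℕ} {A : Fin d → Fin d → Bool}

def FirstRFGap (A : Fin d → Fin d → Bool) (x : List (Fin d)) (l : ℕ) : Prop :=
  ∃ p r w r' q, x = p ++ r :: (w ++ r' :: q) ∧ (∀ a ∈ p, ¬ rfB A a) ∧ rfB A r ∧
    (∀ a ∈ w, ¬ rfB A a) ∧ rfB A r' ∧ w.length + 1 = l

def HasUniqueRF (A : Fin d → Fin d → Bool) (x : List (Fin d)) : Prop :=
  ∃ p r q, x = p ++ r :: q ∧ (∀ a ∈ p, ¬ rfB A a) ∧ rfB A r ∧ ∀ a ∈ q, ¬ rfB A a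

lemma FirstRFGap.unique {x : List (Fin d)} {l₁ l₂ : ℕ} (h₁ : FirstRFGap A x l₁)
    (h₂ : FirstRFGap A x l₂) : l₁ = l₂ := by
  obtain ⟨p, r, w, r', q, rfl, hp, hr, hw, hr', rfl⟩ := h₁
  obtain ⟨p₂, r₂, w₂, r₂', q₂, h, hp₂, hr₂, hw₂, hr₂', rfl⟩ := h₂
  obtain ⟨-, -, h⟩ := List.eq_of_append_cons_eq_append_cons h hp hp₂ hr hr₂
  obtain ⟨rfl, -, -⟩ := List.eq_of_append_cons_eq_append_cons h hw hw₂ hr' hr₂'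
  rfl

lemma FirstRFGap.not_hasUniqueRF {x : List (Fin d)} {l : ℕ} (h : FirstRFGap A x l) :
    ¬ HasUniqueRF A x := by
  rintro ⟨p₂, r₂, q₂, h₂, hp₂, hr₂, hq₂⟩
  obtain ⟨p, r, w, r', q, rfl, hp, hr, hw, hr', -⟩ := h
  obtain ⟨-, -, rfl⟩ := List.eq_of_append_cons_eq_append_cons h₂ hp hp₂ hr hr₂
  exact hq₂ r' (by simp) hr'

lemma FirstRFGap.mem_Ico {x : List (Fin d)} {l : ℕ} (h : FirstRFGap A x l) :
    l ∈ Finset.Ico 1 x.length := by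
  obtain ⟨p, r, w, r', q, rfl, -, -, -, -, -, rfl⟩ := h
  simp only [Finset.mem_Ico, List.length_append, List.length_cons]
  omega

lemma firstRFGap_or_hasUniqueRF {x : List (Fin d)} (h : ∃ a ∈ x, rfB A a) :
    (∃ l, FirstRFGap A x l) ∨ HasUniqueRF A x := by
  obtain ⟨p, r, q, rfl, hp, hr⟩ := List.exists_eq_append_cons_of_exists h
  by_cases hq : ∃ a ∈ q, rfB A a
  · obtain ⟨w, r', q', rfl, hw, hr'⟩ := List.exists_eq_append_cons_of_exists hq
    exact Or.inl ⟨_, p, r, w, r', q', rfl, hp, hr, hw, hr', rfl⟩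
  · push Not at hq
    exact Or.inr ⟨p, r, q, rfl, hp, hr, hq⟩

lemma mem_insSet_iff {m l : ℕ} {x : List (Fin d)} :
    x ∈ insSet A m l ↔ isClosedWalk A (m + l) x ∧ FirstRFGap A x l := by
  constructor
  · rintro ⟨u, v, s, hu, hv, hs, hmin, rfl⟩
    obtain ⟨p, r, q, rfl, rfl, hp, hr⟩ := rfAt_first_iff.1 ⟨hs, hmin⟩
    obtain ⟨w, r', rfl, hl, hw, hr', hc⟩ := isXiWalk_iff.1 hv
    rw [List.take_length_add_one_append_drop, List.append_assoc, List.singleton_append,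
      isClosedWalk_insert_iff hr hr' hl]
    exact ⟨⟨hu, hc⟩, p, r, w, r', q, rfl, hp, hr, hw, hr', hl⟩
  · rintro ⟨hx, p, r, w, r', q, rfl, hp, hr, hw, hr', hl⟩
    obtain ⟨hu, hc⟩ := (isClosedWalk_insert_iff hr hr' hl).1 hx
    obtain ⟨hs, hmin⟩ := rfAt_first_iff.2 ⟨p, r, q, rfl, rfl, hp, hr⟩
    refine ⟨p ++ r :: q, w ++ [r'], p.length, hu, isXiWalk_iff.2 ⟨w, r', rfl, hl, hw, hr', hc⟩,
      hs, hmin, ?_⟩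
    rw [List.take_length_add_one_append_drop, List.append_assoc, List.singleton_append]

lemma mem_rotSet_iff {n : ℕ} {x : List (Fin d)} :
    x ∈ rotSet A n ↔ isClosedWalk A n x ∧ HasUniqueRF A x := by
  constructor
  · rintro ⟨_, hl, i, hi, rfl⟩
    obtain ⟨w, r, rfl, hn, hw, hr, hc⟩ := isXiWalk_iff.1 hl
    have hx : (w ++ [r]).drop i ++ (w ++ [r]).take i = w.drop i ++ r :: w.take i := by
      simp [List.drop_append_of_le_length (show i ≤ w.length by omega),
        List.take_append_of_le_length (show i ≤ w.length by omega)]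
    rw [hx, isClosedWalk_append_cons_iff hr, List.take_append_drop]
    exact ⟨⟨by simp; omega, hc⟩, w.drop i, r, w.take i, rfl,
      fun a ha => hw a (List.mem_of_mem_drop ha), hr, fun a ha => hw a (List.mem_of_mem_take ha)⟩
  · rintro ⟨hx, p, r, q, rfl, hp, hr, hq⟩
    obtain ⟨hn, hc⟩ := (isClosedWalk_append_cons_iff hr).1 hx
    refine ⟨q ++ p ++ [r], isXiWalk_iff.2 ⟨q ++ p, r, rfl, by simp; omega, ?_, hr, hc⟩,
      q.length, by omega, by simp⟩
    simp only [List.mem_append]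
    rintro a (ha | ha)
    exacts [hq a ha, hp a ha]

end Partition

theorem partition_of_closed_walks_general {d : ℕ} (A : Fin d → Fin d → Bool)
    (hcyc : CyclesHitRF A) (n : ℕ) :
    (∀ l₁ l₂ : ℕ, 1 ≤ l₁ → l₁ < n → 1 ≤ l₂ → l₂ < n → l₁ ≠ l₂ →
      Disjoint (insSet A (n - l₁) l₁) (insSet A (n - l₂) l₂)) ∧
    (∀ l₀ : ℕ, 1 ≤ l₀ → l₀ < n → Disjoint (insSet A (n - l₀) l₀) (rotSet A n)) ∧
    ((⋃ l₀ ∈ Finset.Ico 1 n, insSet A (n - l₀) l₀) ∪ rotSet A n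
      = {l : List (Fin d) | isClosedWalk A n l}) := by
  refine ⟨fun l₁ l₂ _ _ _ _ hne => Set.disjoint_left.2 fun x h₁ h₂ => ?_,
    fun l₀ _ _ => Set.disjoint_left.2 fun x h₁ h₂ => ?_, Set.ext fun x => ?_⟩
  · exact hne ((mem_insSet_iff.1 h₁).2.unique (mem_insSet_iff.1 h₂).2)
  · exact (mem_insSet_iff.1 h₁).2.not_hasUniqueRF (mem_rotSet_iff.1 h₂).2
  simp only [Set.mem_union, Set.mem_iUnion, exists_prop, mem_insSet_iff, mem_rotSet_iff,
    Set.mem_ofPred_eq]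
  constructor
  · rintro (⟨l, hl, hx, -⟩ | ⟨hx, -⟩)
    · rwa [Nat.sub_add_cancel (Finset.mem_Ico.1 hl).2.le] at hx
    · exact hx
  · intro hx
    rcases firstRFGap_or_hasUniqueRF (hcyc.exists_rfB hx) with ⟨l, hl⟩ | hu
    · have hlx := hl.mem_Ico
      rw [hx.1] at hlx
      exact Or.inl ⟨l, hlx, by rwa [Nat.sub_add_cancel (Finset.mem_Ico.1 hlx).2.le], hl⟩
    · exact Or.inr ⟨hx, hu⟩

/-- **Proposition 3.5.** If every cycle of the digraph of `A` passes
through a right free vertex, then the sets `L(P_{n-1}, Ξ_1), …, L(P_1, Ξ_{n-1})`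
and `T(Ξ_n)` are pairwise disjoint and their union is `P_n`. -/
theorem partition_of_closed_walks {d : ℕ} (A : Fin d → Fin d → Bool)
    (hcyc : CyclesHitRF A) (n : ℕ) (hn : 1 ≤ n) :
    (∀ l₁ l₂ : ℕ, 1 ≤ l₁ → l₁ < n → 1 ≤ l₂ → l₂ < n → l₁ ≠ l₂ →
      Disjoint (insSet A (n - l₁) l₁) (insSet A (n - l₂) l₂)) ∧
    (∀ l₀ : ℕ, 1 ≤ l₀ → l₀ < n → Disjoint (insSet A (n - l₀) l₀) (rotSet A n)) ∧
    ((⋃ l₀ ∈ Finset.Ico 1 n, insSet A (n - l₀) l₀) ∪ rotSet A n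
      = {l : List (Fin d) | isClosedWalk A n l}) :=
  partition_of_closed_walks_general A hcyc n
end

section
/- Let ξ_1,...,ξ_d be nonnegative integers with largest real root ρ of x^d − Σ ξ_i x^{d−i}, ρ > 0, and let (η_i), (δ_i), (ι_i), (τ_i) be nonnegative integers with η_i + τ_i = ξ_i and δ_i + ι_i = ξ_i for all i. Form the 2d×2d nonnegative matrix M₁ whose first row interleaves (η_1,τ_1,...,η_d,τ_d), whose second row interleaves (δ_1,ι_1,...,δ_d,ι_d), with ones in positions (i+2,i) for i ≤ 2d−2 and zeros elsewhere. Then the spectral radius of M₁ equals ρ. -/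
/-!
The vector `v = (ρ^{d-1}, ρ^{d-1}, ρ^{d-2}, ρ^{d-2}, …, 1, 1)` is a positive eigenvector of `M₁`
for `ρ`: since `η_i + τ_i = δ_i + ι_i = ξ_i`, the first two rows give `∑ ξ_i ρ^{d-1-i} = ρ^d`,
and the shift rows send each power `ρ^k` to `ρ^{k+1}`. A nonnegative matrix with a positive
eigenvector for `ρ` has spectral radius `ρ` (Collatz–Wielandt): for an eigenvector `w` of `μ`,
take the least `c` with `|w| ≤ c v`; at a coordinate where equality holds,
`|μ| c v_j = |(M w)_j| ≤ (M |w|)_j ≤ c (M v)_j = c ρ v_j`.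
-/

open Matrix Finset

theorem Finset.sum_range_two_mul {M : Type*} [AddCommMonoid M] (n : ℕ) (f : ℕ → M) :
    ∑ i ∈ range (2 * n), f i = ∑ i ∈ range n, (f (2 * i) + f (2 * i + 1)) := by
  induction n with
  | zero => simp
  | succ n ih =>
    rw [show 2 * (n + 1) = 2 * n + 1 + 1 by ring, sum_range_succ, sum_range_succ,
      sum_range_succ, ih, add_assoc]

namespace Matrix

variable {n : Type*} [Fintype n]

theorem norm_mulVec_map_ofReal_le {A : Matrix n n ℝ} (hA : ∀ i j, 0 ≤ A i j) (w : n → ℂ)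
    (i : n) : ‖(A.map Complex.ofReal *ᵥ w) i‖ ≤ (A *ᵥ fun j => ‖w j‖) i := by
  simp only [mulVec, dotProduct, map_apply]
  refine (norm_sum_le _ _).trans (sum_le_sum fun j _ => ?_)
  rw [norm_mul, Complex.norm_real, Real.norm_of_nonneg (hA i j)]

variable [DecidableEq n]

theorem hasEigenvalue_toLin'_iff_mem_spectrum {K : Type*} [Field K] {A : Matrix n n K} {μ : K} :
    Module.End.HasEigenvalue A.toLin' μ ↔ μ ∈ spectrum K A := by
  rw [Module.End.hasEigenvalue_iff_mem_spectrum, spectrum_toLin']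

theorem mem_spectrum_of_mulVec_eq_smul {K : Type*} [Field K] {A : Matrix n n K} {μ : K}
    {v : n → K} (hv : v ≠ 0) (h : A *ᵥ v = μ • v) : μ ∈ spectrum K A :=
  hasEigenvalue_toLin'_iff_mem_spectrum.mp <| Module.End.hasEigenvalue_of_hasEigenvector
    ⟨by rwa [Module.End.mem_eigenspace_iff, toLin'_apply], hv⟩

theorem exists_mulVec_eq_smul_of_mem_spectrum {K : Type*} [Field K] {A : Matrix n n K} {μ : K}
    (h : μ ∈ spectrum K A) : ∃ v ≠ 0, A *ᵥ v = μ • v := by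
  obtain ⟨v, hv, hv0⟩ := (hasEigenvalue_toLin'_iff_mem_spectrum.mpr h).exists_hasEigenvector
  exact ⟨v, hv0, by rwa [Module.End.mem_eigenspace_iff, toLin'_apply] at hv⟩

theorem norm_le_of_mem_spectrum_of_mulVec_le {A : Matrix n n ℝ} (hA : ∀ i j, 0 ≤ A i j)
    {v : n → ℝ} (hv : ∀ i, 0 < v i) {r : ℝ} (hAv : ∀ i, (A *ᵥ v) i ≤ r * v i) {μ : ℂ}
    (hμ : μ ∈ spectrum ℂ (A.map Complex.ofReal)) : ‖μ‖ ≤ r := by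
  obtain ⟨w, hw0, hw⟩ := exists_mulVec_eq_smul_of_mem_spectrum hμ
  obtain ⟨k, hk⟩ := Function.ne_iff.mp hw0
  obtain ⟨j, -, hj⟩ := exists_max_image univ (fun i => ‖w i‖ / v i) ⟨k, mem_univ k⟩
  set c := ‖w j‖ / v j
  have hc : 0 < c := (div_pos (norm_pos_iff.mpr hk) (hv k)).trans_le (hj k (mem_univ k))
  have hwc : ∀ i, ‖w i‖ ≤ c * v i := fun i => (div_le_iff₀ (hv i)).mp (hj i (mem_univ i))
  have hcj : c * v j = ‖w j‖ := div_mul_cancel₀ _ (hv j).ne'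
  refine le_of_mul_le_mul_right ?_ (hcj ▸ mul_pos hc (hv j))
  calc ‖μ‖ * ‖w j‖ = ‖(A.map Complex.ofReal *ᵥ w) j‖ := by simp [hw]
    _ ≤ (A *ᵥ fun i => ‖w i‖) j := norm_mulVec_map_ofReal_le hA w j
    _ ≤ (A *ᵥ (c • v)) j := sum_le_sum fun i _ => mul_le_mul_of_nonneg_left (hwc i) (hA j i)
    _ = c * (A *ᵥ v) j := by rw [mulVec_smul, Pi.smul_apply, smul_eq_mul]
    _ ≤ c * (r * v j) := mul_le_mul_of_nonneg_left (hAv j) hc.le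
    _ = r * ‖w j‖ := by rw [mul_left_comm, hcj]

theorem isGreatest_norm_spectrum_of_mulVec_eq_smul [Nonempty n] {A : Matrix n n ℝ}
    (hA : ∀ i j, 0 ≤ A i j) {v : n → ℝ} (hv : ∀ i, 0 < v i) {r : ℝ} (hAv : A *ᵥ v = r • v) :
    IsGreatest {s : ℝ | ∃ μ ∈ spectrum ℂ (A.map Complex.ofReal), s = ‖μ‖} r := by
  obtain ⟨i⟩ := ‹Nonempty n›
  have hr : 0 ≤ r := by
    have : 0 ≤ (A *ᵥ v) i := sum_nonneg fun j _ => mul_nonneg (hA i j) (hv j).le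
    rw [hAv, Pi.smul_apply, smul_eq_mul] at this
    exact nonneg_of_mul_nonneg_left this (hv i)
  refine ⟨⟨r, mem_spectrum_of_mulVec_eq_smul (v := Complex.ofReal ∘ v) ?_ ?_, ?_⟩, ?_⟩
  · exact Function.ne_iff.mpr ⟨i, by simpa using (hv i).ne'⟩
  · ext j
    exact (RingHom.map_mulVec Complex.ofRealHom A v j).symm.trans (by simp [hAv])
  · simp [abs_of_nonneg hr]
  · rintro s ⟨μ, hμ, rfl⟩
    exact norm_le_of_mem_spectrum_of_mulVec_le hA hv (fun j => (congrFun hAv j).le) hμ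

end Matrix

def interleave (p q : ℕ → ℕ) (b : ℕ) : ℝ := if b % 2 = 0 then p (b / 2) else q (b / 2)

def matrixM₁ (d : ℕ) (η τ δ ι : ℕ → ℕ) : Matrix (Fin (2 * d)) (Fin (2 * d)) ℝ :=
  of fun a b => if (a : ℕ) = 0 then interleave η τ b
    else if (a : ℕ) = 1 then interleave δ ι b else if (a : ℕ) = b + 2 then 1 else 0

def pairedPowers (d : ℕ) (ρ : ℝ) (j : Fin (2 * d)) : ℝ := ρ ^ (d - 1 - (j : ℕ) / 2)

theorem matrixM₁_nonneg (d : ℕ) (η τ δ ι : ℕ → ℕ) (a b : Fin (2 * d)) :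
    0 ≤ matrixM₁ d η τ δ ι a b := by
  simp only [matrixM₁, of_apply, interleave]
  split_ifs <;> positivity

theorem sum_interleave_mul_pairedPowers {d : ℕ} {ξ p q : ℕ → ℕ}
    (hpq : ∀ i < d, p i + q i = ξ i) (ρ : ℝ) :
    ∑ b : Fin (2 * d), interleave p q b * pairedPowers d ρ b =
      ∑ i ∈ range d, (ξ i : ℝ) * ρ ^ (d - 1 - i) := by
  unfold pairedPowers
  rw [Fin.sum_univ_eq_sum_range (fun b => interleave p q b * ρ ^ (d - 1 - b / 2)),
    sum_range_two_mul]
  refine sum_congr rfl fun i hi => ?_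
  have heven : 2 * i % 2 = 0 ∧ 2 * i / 2 = i := by omega
  have hodd : (2 * i + 1) % 2 = 1 ∧ (2 * i + 1) / 2 = i := by omega
  simp only [interleave, heven, hodd, if_true, one_ne_zero, if_false,
    ← hpq i (mem_range.mp hi), Nat.cast_add]
  ring

theorem matrixM₁_mulVec_pairedPowers {d : ℕ} {ξ η τ δ ι : ℕ → ℕ}
    (hητ : ∀ i < d, η i + τ i = ξ i) (hδι : ∀ i < d, δ i + ι i = ξ i) {ρ : ℝ}
    (hρ : ρ ^ d = ∑ i ∈ range d, (ξ i : ℝ) * ρ ^ (d - 1 - i)) :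
    matrixM₁ d η τ δ ι *ᵥ pairedPowers d ρ = ρ • pairedPowers d ρ := by
  ext ⟨a, ha⟩
  simp only [mulVec, dotProduct, Pi.smul_apply, smul_eq_mul, matrixM₁, of_apply]
  have hρv (k : ℕ) (hk : k < 2 * d) : ρ * ρ ^ (d - 1 - k / 2) = ρ ^ (d - k / 2) := by
    rw [← pow_succ']
    congr 1
    omega
  match a, ha with
  | 0, ha =>
    simp only [↓reduceIte]
    rw [sum_interleave_mul_pairedPowers hητ, pairedPowers, hρv 0 ha, ← hρ]; rfl
  | 1, ha =>
    simp only [Nat.reduceEqDiff, ↓reduceIte]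
    rw [sum_interleave_mul_pairedPowers hδι, pairedPowers, hρv 1 ha, ← hρ]; rfl
  | a + 2, ha =>
    simp only [Nat.reduceEqDiff, ↓reduceIte, add_left_inj, ite_mul, one_mul, zero_mul]
    rw [Fintype.sum_eq_single (⟨a, by omega⟩ : Fin (2 * d))
      fun x hx => if_neg fun h : a = x => hx (Fin.ext h.symm),
      if_pos rfl]
    show ρ ^ (d - 1 - a / 2) = ρ * ρ ^ (d - 1 - (a + 2) / 2)
    rw [hρv (a + 2) ha]
    congr 1
    omega

/-- **Case `M₁` of Corollary 5.3.** Let `ρ > 0` be the largest real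
root of `x^d − ∑ ξ_i x^{d-i}`, and let `η_i + τ_i = ξ_i`, `δ_i + ι_i = ξ_i`.  The
`2d × 2d` nonnegative matrix `M₁` whose first row interleaves `(η_1, τ_1, …, η_d, τ_d)`,
whose second row interleaves `(δ_1, ι_1, …, δ_d, ι_d)`, with ones in positions
`(i+2, i)` and zeros elsewhere, has spectral radius `ρ`. -/
theorem full_degree_matrix (d : ℕ) (hd : 1 ≤ d) (ξ η τ δ ι : ℕ → ℕ)
    (hητ : ∀ i, i < d → η i + τ i = ξ i) (hδι : ∀ i, i < d → δ i + ι i = ξ i)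
    (ρ : ℝ) (hρpos : 0 < ρ)
    (hρ : IsGreatest {x : ℝ | x ^ d - ∑ i ∈ Finset.range d, (ξ i : ℝ) * x ^ (d - 1 - i) = 0} ρ)
    (M : Matrix (Fin (2 * d)) (Fin (2 * d)) ℝ)
    (hM : ∀ a b : Fin (2 * d), M a b =
      if (a : ℕ) = 0 then
        (if (b : ℕ) % 2 = 0 then (η ((b : ℕ) / 2) : ℝ) else (τ ((b : ℕ) / 2) : ℝ))
      else if (a : ℕ) = 1 then
        (if (b : ℕ) % 2 = 0 then (δ ((b : ℕ) / 2) : ℝ) else (ι ((b : ℕ) / 2) : ℝ))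
      else if (a : ℕ) = (b : ℕ) + 2 then 1 else 0) :
    IsGreatest {r : ℝ | ∃ μ ∈ spectrum ℂ (M.map (Complex.ofReal)), r = ‖μ‖} ρ := by
  obtain rfl : M = matrixM₁ d η τ δ ι := Matrix.ext hM
  have hroot : ρ ^ d = ∑ i ∈ range d, (ξ i : ℝ) * ρ ^ (d - 1 - i) := sub_eq_zero.mp hρ.1
  have : NeZero (2 * d) := ⟨by omega⟩
  exact isGreatest_norm_spectrum_of_mulVec_eq_smul (matrixM₁_nonneg d η τ δ ι)
    (fun j => pow_pos hρpos _) (matrixM₁_mulVec_pairedPowers hητ hδι hroot)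
end
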